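/- arXiv:0705.3014 — 4 statements merged into one kernel-verified Lean document; each statement's English description precedes it below -/
import Mathlib

section
/- Let (r_n), (u_n), (v_n) be sequences of positive reals (n ≥ 0) such that r_n(v_{n+1}u_n - u_{n+1}v_n) = 1 for all n, and u_n = v_n · ∑_{k=n}^∞ 1/(r_k v_k v_{k+1}) for all n (the tail series being finite). Then the series ∑_{n=0}^∞ 1/(r_n u_n v_{n+1}) diverges. -/
/-!
Write `a_n = 1 / (r_n v_n v_{n+1})` and `R_n = ∑_{k ≥ n} a_k`, so that `u_n = v_n R_n` and the
terms of the series are `a_n / R_n`. Since `R` is decreasing, the tail of `∑ a_k / R_k` from `n`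
is at least `(∑_{k ≥ n} a_k) / R_n = 1`, while tails of a convergent series tend to `0`.
-/

open Filter Topology

noncomputable def tailSum (a : ℕ → ℝ) (n : ℕ) : ℝ := ∑' k, a (n + k)

section TailSum

variable {a : ℕ → ℝ}

theorem Summable.comp_add_left (hS : Summable a) (n : ℕ) : Summable fun k => a (n + k) := by
  simpa only [add_comm] using (summable_nat_add_iff n).mpr hS

theorem tailSum_eq_add_tailSum_succ (hS : Summable a) (n : ℕ) :
    tailSum a n = a n + tailSum a (n + 1) := by
  simpa only [tailSum, add_zero, add_assoc, add_comm 1] using (hS.comp_add_left n).tsum_eq_zero_add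

theorem tailSum_antitone (ha : ∀ n, 0 ≤ a n) (hS : Summable a) : Antitone (tailSum a) :=
  antitone_nat_of_succ_le fun n => by linarith [tailSum_eq_add_tailSum_succ hS n, ha n]

theorem tailSum_pos (ha : ∀ n, 0 < a n) (hS : Summable a) (n : ℕ) : 0 < tailSum a n :=
  (hS.comp_add_left n).tsum_pos (fun _ => (ha _).le) 0 (ha _)

theorem tendsto_tailSum_atTop (a : ℕ → ℝ) : Tendsto (tailSum a) atTop (𝓝 0) := by
  unfold tailSum
  simpa only [add_comm] using tendsto_sum_nat_add a

theorem one_le_tailSum_div_tailSum (ha : ∀ n, 0 < a n) (hS : Summable a)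
    (hf : Summable fun n => a n / tailSum a n) (n : ℕ) :
    1 ≤ tailSum (fun m => a m / tailSum a m) n := by
  have hRn := tailSum_pos ha hS n
  calc (1 : ℝ) = tailSum a n / tailSum a n := (div_self hRn.ne').symm
    _ = ∑' k, a (n + k) / tailSum a n := tsum_div_const.symm
    _ ≤ ∑' k, a (n + k) / tailSum a (n + k) :=
        ((hS.comp_add_left n).div_const _).tsum_le_tsum
          (fun k => div_le_div_of_nonneg_left (ha _).le (tailSum_pos ha hS _)
            (tailSum_antitone (fun m => (ha m).le) hS (Nat.le_add_right n k)))
          (hf.comp_add_left n)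

/-- The Abel–Dini theorem. -/
theorem not_summable_div_tailSum (ha : ∀ n, 0 < a n) (hS : Summable a) :
    ¬ Summable fun n => a n / tailSum a n := fun hf =>
  absurd (ge_of_tendsto' (tendsto_tailSum_atTop _) (one_le_tailSum_div_tailSum ha hS hf))
    (by norm_num)

end TailSum

theorem stmt_3_general (r u v : ℕ → ℝ)
    (hr : ∀ n, 0 < r n) (hv : ∀ n, 0 < v n)
    (hS : Summable (fun k : ℕ => 1 / (r k * v k * v (k + 1))))
    (huv : ∀ n, u n = v n * ∑' k : ℕ, 1 / (r (n + k) * v (n + k) * v (n + k + 1))) :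
    ¬ Summable (fun n : ℕ => 1 / (r n * u n * v (n + 1))) := by
  set a : ℕ → ℝ := fun k => 1 / (r k * v k * v (k + 1))
  have ha : ∀ n, 0 < a n := fun n => by have := hr n; have := hv n; have := hv (n + 1); positivity
  have hterm : (fun n => 1 / (r n * u n * v (n + 1))) = fun n => a n / tailSum a n := by
    funext n
    rw [show u n = v n * tailSum a n from huv n, div_div]
    ring
  rw [hterm]
  exact not_summable_div_tailSum ha hS

/-- Lemma 2.1, first part: under the standard relations between the
principal and non-principal solutions, ∑ 1/(r_n u_n v_{n+1}) diverges. -/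
theorem stmt_3 (r u v : ℕ → ℝ)
    (hr : ∀ n, 0 < r n) (hu : ∀ n, 0 < u n) (hv : ∀ n, 0 < v n)
    (hw : ∀ n, r n * (v (n + 1) * u n - u (n + 1) * v n) = 1)
    (hS : Summable (fun k : ℕ => 1 / (r k * v k * v (k + 1))))
    (huv : ∀ n, u n = v n * ∑' k : ℕ, 1 / (r (n + k) * v (n + k) * v (n + k + 1))) :
    ¬ Summable (fun n : ℕ => 1 / (r n * u n * v (n + 1))) :=
  stmt_3_general r u v hr hv hS huv
end

section
/- Let (r_n), (u_n), (v_n) be positive sequences with r_n(v_{n+1}u_n - u_{n+1}v_n) = 1 and u_n = v_n ∑_{k=n}^∞ 1/(r_k v_k v_{k+1}), and suppose additionally v_{n+1} ≥ v_n for all n ≥ 0. Then ∑_{n=0}^∞ 1/(r_n u_n v_n) = ∞. -/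
/-!
Write `t_n = ∑_{k ≥ n} 1/(r_k v_k v_{k+1})`, so that `u_n = v_n t_n`. Since `v` is nondecreasing,
`1/(r_n u_n v_n) ≥ 1/(r_n u_n v_{n+1}) = f_n / t_n` with `f_n = t_n - t_{n+1}`, and `∑ f_n / t_n`
diverges for every positive summable `f` (Abel–Dini): the block from `N` to `N + M` is at least
`(t_N - t_{N+M}) / t_N`, which tends to `1` as `M → ∞`, so the tails of `∑ f_n / t_n` do not vanish.
-/

open Filter Finset

section TailSum

variable {f : ℕ → ℝ}

theorem sum_range_nat_add_eq_tsum_sub (hf : Summable f) (N M : ℕ) :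
    ∑ k ∈ range M, f (k + N) = ∑' k, f (k + N) - ∑' k, f (k + (M + N)) := by
  have h := ((summable_nat_add_iff N).2 hf).sum_add_tsum_nat_add M
  simp only [add_assoc] at h
  linarith

theorem antitone_tsum_nat_add (hf : Summable f) (hnonneg : ∀ n, 0 ≤ f n) :
    Antitone fun n => ∑' k, f (k + n) := by
  refine antitone_nat_of_succ_le fun n => ?_
  have h := sum_range_nat_add_eq_tsum_sub hf n 1
  rw [sum_range_one, zero_add, add_comm 1 n] at h
  linarith [hnonneg n]

theorem tsum_nat_add_pos (hf : Summable f) (hpos : ∀ n, 0 < f n) (n : ℕ) :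
    0 < ∑' k, f (k + n) :=
  ((summable_nat_add_iff n).2 hf).tsum_pos (fun _ => (hpos _).le) 0 (hpos _)

theorem one_sub_div_le_sum_range_div_tsum_nat_add (hf : Summable f) (hpos : ∀ n, 0 < f n)
    (N M : ℕ) :
    1 - (∑' k, f (k + (M + N))) / ∑' k, f (k + N) ≤
      ∑ k ∈ range M, f (k + N) / ∑' j, f (j + (k + N)) := by
  have htN := tsum_nat_add_pos hf hpos N
  calc 1 - (∑' k, f (k + (M + N))) / ∑' k, f (k + N)
      = (∑ k ∈ range M, f (k + N)) / ∑' k, f (k + N) := by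
        rw [sum_range_nat_add_eq_tsum_sub hf, sub_div, div_self htN.ne']
    _ = ∑ k ∈ range M, f (k + N) / ∑' j, f (j + N) := sum_div _ _ _
    _ ≤ ∑ k ∈ range M, f (k + N) / ∑' j, f (j + (k + N)) := by
        refine sum_le_sum fun k _ => div_le_div_of_nonneg_left (hpos _).le
          (tsum_nat_add_pos hf hpos _) ?_
        exact antitone_tsum_nat_add hf (fun n => (hpos n).le) (Nat.le_add_left N k)

theorem one_le_tsum_div_tsum_nat_add (hf : Summable f) (hpos : ∀ n, 0 < f n)
    (hg : Summable fun n => f n / ∑' k, f (k + n)) (N : ℕ) :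
    1 ≤ ∑' k, f (k + N) / ∑' j, f (j + (k + N)) := by
  have hlim : Tendsto (fun M => 1 - (∑' k, f (k + (M + N))) / ∑' k, f (k + N)) atTop (nhds 1) := by
    simpa using ((tendsto_sum_nat_add f).comp (tendsto_add_atTop_nat N)).div_const
      (∑' k, f (k + N)) |>.const_sub 1
  refine le_of_tendsto' hlim fun M => ?_
  refine (one_sub_div_le_sum_range_div_tsum_nat_add hf hpos N M).trans ?_
  exact ((summable_nat_add_iff N).2 hg).sum_le_tsum _
    (fun k _ => div_nonneg (hpos _).le (tsum_nat_add_pos hf hpos _).le)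

theorem not_summable_div_tsum_nat_add (hf : Summable f) (hpos : ∀ n, 0 < f n) :
    ¬ Summable fun n => f n / ∑' k, f (k + n) := fun hg =>
  absurd (ge_of_tendsto' (tendsto_sum_nat_add fun n => f n / ∑' k, f (k + n))
    (one_le_tsum_div_tsum_nat_add hf hpos hg)) (by norm_num)

end TailSum

theorem stmt_4_general (r u v : ℕ → ℝ)
    (hr : ∀ n, 0 < r n) (hu : ∀ n, 0 < u n) (hv : ∀ n, 0 < v n)
    (hS : Summable (fun k : ℕ => 1 / (r k * v k * v (k + 1))))
    (huv : ∀ n, u n = v n * ∑' k : ℕ, 1 / (r (n + k) * v (n + k) * v (n + k + 1)))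
    (hmono : ∀ n, v n ≤ v (n + 1)) :
    ¬ Summable (fun n : ℕ => 1 / (r n * u n * v n)) := by
  set f : ℕ → ℝ := fun k => 1 / (r k * v k * v (k + 1))
  have hf_pos (n : ℕ) : 0 < f n := by have := hr n; have := hv n; have := hv (n + 1); positivity
  have hu_tail (n : ℕ) : u n = v n * ∑' k, f (k + n) := by
    rw [huv n]; simp only [f, add_comm n]
  have hterm (n : ℕ) : f n / ∑' k, f (k + n) ≤ 1 / (r n * u n * v n) := by
    have hrun : 0 < r n * u n := mul_pos (hr n) (hu n)
    calc f n / ∑' k, f (k + n) = 1 / (r n * u n * v (n + 1)) := by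
          rw [hu_tail n, div_div]; ring_nf
      _ ≤ 1 / (r n * u n * v n) :=
          one_div_le_one_div_of_le (mul_pos hrun (hv n))
            (mul_le_mul_of_nonneg_left (hmono n) hrun.le)
  exact fun h => not_summable_div_tsum_nat_add hS hf_pos
    (h.of_nonneg_of_le (fun n => div_nonneg (hf_pos n).le (tsum_nat_add_pos hS hf_pos n).le) hterm)

/-- Lemma 2.1, second part: if additionally v is nondecreasing, then
∑ 1/(r_n u_n v_n) diverges. -/
theorem stmt_4 (r u v : ℕ → ℝ)
    (hr : ∀ n, 0 < r n) (hu : ∀ n, 0 < u n) (hv : ∀ n, 0 < v n)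
    (hw : ∀ n, r n * (v (n + 1) * u n - u (n + 1) * v n) = 1)
    (hS : Summable (fun k : ℕ => 1 / (r k * v k * v (k + 1))))
    (huv : ∀ n, u n = v n * ∑' k : ℕ, 1 / (r (n + k) * v (n + k) * v (n + k + 1)))
    (hmono : ∀ n, v n ≤ v (n + 1)) :
    ¬ Summable (fun n : ℕ => 1 / (r n * u n * v n)) :=
  stmt_4_general r u v hr hu hv hS huv hmono
end

section
/- In the setting of Assertion 1 (positive sequences r, u, v with r_n(v_{n+1}u_n - u_{n+1}v_n)=1, u_n/v_n = ∑_{k=n}^∞ 1/(r_k v_k v_{k+1}), complex σ with J = ∑ σ_n u_n v_n convergent, C_n = (v_n/u_n)∑_{k=n}^∞ σ_k u_k^2, J_n = ∑_{k=n}^∞ σ_k u_k v_k), the series H_n = ∑_{k=n}^∞ C_{k+1}/(r_k u_k v_{k+1}) converges for every n, and H_n = (v_n/u_n) ∑_{k=n}^∞ J_{k+1}/(r_k v_k v_{k+1}); equivalently, H_n = J_n - C_n. -/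
/-!
Put `t_n = u_n / v_n`. The Casoratian identity `r_n (v_{n+1} u_n - u_{n+1} v_n) = 1` gives
`t_n - t_{n+1} = 1 / (r_n v_n v_{n+1})`, so `t` decreases to `0`, and
`∑_{k ≥ n} J_{k+1} / (r_k v_k v_{k+1}) = ∑_{k ≥ n} (t_k - t_{k+1}) J_{k+1}`. Summation by parts
against the null sequence `J` evaluates this to `t_n J_n - R_n = t_n (J_n - C_n)`; as it is also
at most `t_n sup_{k > n} |J_k|` in norm, `C_n → 0`. Finally
`C_{k+1} / (r_k u_k v_{k+1}) = (C_{k+1} - J_{k+1}) - (C_k - J_k)`, so `H_n` telescopes to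
`J_n - C_n`.
-/

open Filter Topology Finset

lemma Filter.Tendsto.comp_const_add {α : Type*} {f : ℕ → α} {l : Filter α}
    (h : Tendsto f atTop l) (n : ℕ) : Tendsto (fun k => f (n + k)) atTop l := by
  simpa only [add_comm n] using (tendsto_add_atTop_iff_nat n).2 h

lemma tendsto_sum_range_sub_const_add {G : Type*} [AddCommGroup G] [TopologicalSpace G]
    [IsTopologicalAddGroup G] {f : ℕ → G} (hf : Tendsto f atTop (𝓝 0)) (n : ℕ) :
    Tendsto (fun N => ∑ k ∈ range N, (f (n + k + 1) - f (n + k))) atTop (𝓝 (-f n)) := by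
  have htel (N : ℕ) : ∑ k ∈ range N, (f (n + k + 1) - f (n + k)) = f (n + N) - f n :=
    sum_range_sub (fun k => f (n + k)) N
  simpa [htel] using (hf.comp_const_add n).sub_const (f n)

lemma eq_add_of_tendsto_sum_range_const_add {G : Type*} [AddCommMonoid G] [TopologicalSpace G]
    [ContinuousAdd G] [T2Space G] {f R : ℕ → G}
    (hR : ∀ n, Tendsto (fun N => ∑ k ∈ range N, f (n + k)) atTop (𝓝 (R n))) (n : ℕ) :
    R n = f n + R (n + 1) := by
  have hsucc (N : ℕ) : ∑ k ∈ range (N + 1), f (n + k) = f n + ∑ k ∈ range N, f (n + 1 + k) := by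
    rw [sum_range_succ', add_comm]
    simp only [add_zero, Nat.add_right_comm n 1, add_assoc]
  refine tendsto_nhds_unique ((hR n).comp (tendsto_add_atTop_nat 1)) ?_
  simpa only [Function.comp_def, hsucc] using tendsto_const_nhds.add (hR (n + 1))

lemma tendsto_zero_of_forall_eq_tsum_nat_add {G : Type*} [AddCommGroup G] [TopologicalSpace G]
    [IsTopologicalAddGroup G] [T2Space G] {x f : ℕ → G} (h : ∀ n, x n = ∑' k, f (n + k)) :
    Tendsto x atTop (𝓝 0) :=
  (tendsto_sum_nat_add f).congr fun n => by rw [h n, tsum_congr fun k => by rw [add_comm]]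

lemma tendsto_sub_sum_range_zero {G : Type*} [AddCommGroup G] [TopologicalSpace G]
    [IsTopologicalAddGroup G] {f : ℕ → G} {J : G}
    (hJ : Tendsto (fun N => ∑ k ∈ range N, f k) atTop (𝓝 J)) :
    Tendsto (fun n => J - ∑ k ∈ range n, f k) atTop (𝓝 0) := by
  simpa using (tendsto_const_nhds (x := J)).sub hJ

section AbelSummation

variable {E : Type*} [NormedAddCommGroup E] [NormedSpace ℝ E] {t : ℕ → ℝ} {a : ℕ → E}

lemma Antitone.comp_const_add (ht : Antitone t) (n : ℕ) : Antitone fun k => t (n + k) :=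
  fun _ _ h => ht (Nat.add_le_add_left h n)

lemma Antitone.hasSum_sub_succ (ht : Antitone t) (ht0 : Tendsto t atTop (𝓝 0)) :
    HasSum (fun k => t k - t (k + 1)) (t 0) := by
  refine (hasSum_iff_tendsto_nat_of_nonneg (fun k => sub_nonneg.2 (ht k.le_succ)) _).2 ?_
  simp only [sum_range_sub']
  simpa using tendsto_const_nhds.sub ht0

lemma Antitone.norm_sub_succ_smul_le {M : ℝ} (ht : Antitone t) (ha : ∀ k, ‖a (k + 1)‖ ≤ M)
    (k : ℕ) : ‖(t k - t (k + 1)) • a (k + 1)‖ ≤ M * (t k - t (k + 1)) := by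
  have hd : 0 ≤ t k - t (k + 1) := sub_nonneg.2 (ht k.le_succ)
  rw [norm_smul, Real.norm_of_nonneg hd, mul_comm]
  exact mul_le_mul_of_nonneg_right (ha k) hd

lemma Antitone.summable_sub_succ_smul [CompleteSpace E] {M : ℝ} (ht : Antitone t)
    (ht0 : Tendsto t atTop (𝓝 0)) (ha : ∀ k, ‖a (k + 1)‖ ≤ M) :
    Summable fun k => (t k - t (k + 1)) • a (k + 1) :=
  .of_norm_bounded ((ht.hasSum_sub_succ ht0).summable.mul_left M) (ht.norm_sub_succ_smul_le ha)

lemma Antitone.norm_tsum_sub_succ_smul_le {M : ℝ} (ht : Antitone t)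
    (ht0 : Tendsto t atTop (𝓝 0)) (ha : ∀ k, ‖a (k + 1)‖ ≤ M) :
    ‖∑' k, (t k - t (k + 1)) • a (k + 1)‖ ≤ M * t 0 :=
  tsum_of_norm_bounded ((ht.hasSum_sub_succ ht0).mul_left M) (ht.norm_sub_succ_smul_le ha)

lemma Antitone.hasSum_sub_succ_smul [CompleteSpace E] {R : E} (ht : Antitone t)
    (ht0 : Tendsto t atTop (𝓝 0)) (ha : Tendsto a atTop (𝓝 0))
    (hR : Tendsto (fun N => ∑ k ∈ range N, t k • (a k - a (k + 1))) atTop (𝓝 R)) :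
    HasSum (fun k => (t k - t (k + 1)) • a (k + 1)) (t 0 • a 0 - R) := by
  obtain ⟨M, hM⟩ := ha.norm.bddAbove_range
  rw [(ht.summable_sub_succ_smul ht0 fun k => hM ⟨k + 1, rfl⟩).hasSum_iff_tendsto_nat]
  have hpartial (N : ℕ) : ∑ k ∈ range N, (t k - t (k + 1)) • a (k + 1) =
      (t 0 • a 0 - t N • a N) - ∑ k ∈ range N, t k • (a k - a (k + 1)) := by
    rw [← sum_range_sub' (fun k => t k • a k), ← sum_sub_distrib]
    refine sum_congr rfl fun k _ => ?_
    simp only [sub_smul, smul_sub]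
    abel
  simp only [hpartial]
  simpa using (tendsto_const_nhds.sub (ht0.smul ha)).sub hR

lemma Antitone.hasSum_tail_sub_succ_smul [CompleteSpace E] {R : E} {n : ℕ} (ht : Antitone t)
    (ht0 : Tendsto t atTop (𝓝 0)) (ha : Tendsto a atTop (𝓝 0))
    (hR : Tendsto (fun N => ∑ k ∈ range N, t (n + k) • (a (n + k) - a (n + k + 1))) atTop (𝓝 R)) :
    HasSum (fun k => (t (n + k) - t (n + k + 1)) • a (n + k + 1)) (t n • a n - R) :=
  (ht.comp_const_add n).hasSum_sub_succ_smul (a := fun k => a (n + k)) (ht0.comp_const_add n)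
    (ha.comp_const_add n) hR

lemma Antitone.tendsto_inv_smul_tsum_sub_succ_smul (ht : Antitone t)
    (ht0 : Tendsto t atTop (𝓝 0)) (ha : Tendsto a atTop (𝓝 0)) :
    Tendsto (fun n => (t n)⁻¹ • ∑' k, (t (n + k) - t (n + k + 1)) • a (n + k + 1))
      atTop (𝓝 0) := by
  refine NormedAddGroup.tendsto_nhds_zero.2 fun ε hε => ?_
  obtain ⟨N, hN⟩ := eventually_atTop.1
    (NormedAddGroup.tendsto_nhds_zero.1 ha (ε / 2) (half_pos hε))
  filter_upwards [eventually_ge_atTop N] with n hn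
  have htail : ‖∑' k, (t (n + k) - t (n + k + 1)) • a (n + k + 1)‖ ≤ ε / 2 * t n :=
    Antitone.norm_tsum_sub_succ_smul_le (a := fun k => a (n + k))
      (ht.comp_const_add n) (ht0.comp_const_add n)
      fun k => (hN _ (by omega)).le
  calc ‖(t n)⁻¹ • ∑' k, (t (n + k) - t (n + k + 1)) • a (n + k + 1)‖
      ≤ ε / 2 * (|t n|⁻¹ * t n) := by
        rw [norm_smul, norm_inv, Real.norm_eq_abs, mul_left_comm]
        gcongr
    _ ≤ ε / 2 * 1 := by gcongr; exact inv_mul_le_one_of_le₀ (le_abs_self _) (abs_nonneg _)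
    _ < ε := by linarith

lemma Antitone.tendsto_inv_smul_of_tendsto_sum_range [CompleteSpace E] {R : ℕ → E}
    (ht : Antitone t) (ht0 : Tendsto t atTop (𝓝 0)) (htpos : ∀ n, 0 < t n)
    (ha : Tendsto a atTop (𝓝 0))
    (hR : ∀ n, Tendsto (fun N => ∑ k ∈ range N, t (n + k) • (a (n + k) - a (n + k + 1)))
      atTop (𝓝 (R n))) :
    Tendsto (fun n => (t n)⁻¹ • R n) atTop (𝓝 0) := by
  have hR_eq (n : ℕ) : (t n)⁻¹ • R n =
      a n - (t n)⁻¹ • ∑' k, (t (n + k) - t (n + k + 1)) • a (n + k + 1) := by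
    rw [(ht.hasSum_tail_sub_succ_smul ht0 ha (hR n)).tsum_eq, smul_sub,
      inv_smul_smul₀ (htpos n).ne', sub_sub_cancel]
  simp only [hR_eq]
  simpa using ha.sub (ht.tendsto_inv_smul_tsum_sub_succ_smul ht0 ha)

end AbelSummation

lemma div_sub_div_eq_one_div_of_casoratian {K : Type*} [Field K] {a b a' b' ρ : K}
    (hb : b ≠ 0) (hb' : b' ≠ 0) (hw : ρ * (b' * a - a' * b) = 1) :
    a / b - a' / b' = 1 / (ρ * b * b') := by
  have hρ : ρ ≠ 0 := left_ne_zero_of_mul_eq_one hw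
  field_simp
  linear_combination hw

/-- With `a, b, a', b', ρ, x, R = u k, v k, u (k+1), v (k+1), r k, σ k, R (k+1)` this is the
difference identity `C (k+1) - C k = C (k+1) / (r k u k v (k+1)) - σ k u k v k`. -/
lemma casoratian_difference_identity {K : Type*} [Field K] {a b a' b' ρ x R : K}
    (ha : a ≠ 0) (ha' : a' ≠ 0) (hb' : b' ≠ 0) (hw : ρ * (b' * a - a' * b) = 1) :
    b' / a' * R / (ρ * a * b') = b' / a' * R - b / a * (x * a ^ 2 + R) + x * a * b := by
  have hρ : ρ ≠ 0 := left_ne_zero_of_mul_eq_one hw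
  field_simp
  linear_combination (-R) * hw

lemma antitone_div_of_casoratian {r u v : ℕ → ℝ} (hr : ∀ n, 0 < r n) (hv : ∀ n, 0 < v n)
    (hw : ∀ n, r n * (v (n + 1) * u n - u (n + 1) * v n) = 1) : Antitone fun n => u n / v n :=
  antitone_nat_of_succ_le fun n => by
    have := hr n; have := hv n; have := hv (n + 1)
    rw [← sub_nonneg, div_sub_div_eq_one_div_of_casoratian (hv n).ne' (hv (n + 1)).ne' (hw n)]
    positivity

lemma sub_succ_div_smul_eq_div_of_casoratian {r u v : ℕ → ℝ} (hv : ∀ n, v n ≠ 0)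
    (hw : ∀ n, r n * (v (n + 1) * u n - u (n + 1) * v n) = 1) (k : ℕ) (z : ℂ) :
    (u k / v k - u (k + 1) / v (k + 1)) • z = z / ((r k * v k * v (k + 1) : ℝ) : ℂ) := by
  rw [div_sub_div_eq_one_div_of_casoratian (hv k) (hv (k + 1)) (hw k), Complex.real_smul]
  push_cast
  ring

lemma succ_div_eq_sub_sub_of_casoratian {r u v : ℕ → ℝ} {σ R C Jt : ℕ → ℂ} (hu : ∀ n, u n ≠ 0)
    (hv : ∀ n, v n ≠ 0) (hw : ∀ n, r n * (v (n + 1) * u n - u (n + 1) * v n) = 1)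
    (hR : ∀ n, R n = σ n * (u n : ℂ) ^ 2 + R (n + 1))
    (hC : ∀ n, C n = ((v n / u n : ℝ) : ℂ) * R n)
    (hJt : ∀ n, Jt n - Jt (n + 1) = σ n * (u n : ℂ) * (v n : ℂ)) (k : ℕ) :
    C (k + 1) / ((r k * u k * v (k + 1) : ℝ) : ℂ) = (C (k + 1) - Jt (k + 1)) - (C k - Jt k) := by
  have hwC : (r k : ℂ) * (v (k + 1) * u k - u (k + 1) * v k) = 1 := mod_cast hw k
  rw [hC (k + 1), hC k, hR k]
  push_cast
  rw [casoratian_difference_identity (x := σ k) (mod_cast hu k) (mod_cast hu (k + 1))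
    (mod_cast hv (k + 1)) hwC]
  linear_combination -hJt k

lemma tendsto_sum_range_succ_div_of_casoratian {r u v : ℕ → ℝ} {σ R C Jt : ℕ → ℂ}
    (hu : ∀ n, u n ≠ 0) (hv : ∀ n, v n ≠ 0)
    (hw : ∀ n, r n * (v (n + 1) * u n - u (n + 1) * v n) = 1)
    (hR : ∀ n, R n = σ n * (u n : ℂ) ^ 2 + R (n + 1))
    (hC : ∀ n, C n = ((v n / u n : ℝ) : ℂ) * R n)
    (hJt : ∀ n, Jt n - Jt (n + 1) = σ n * (u n : ℂ) * (v n : ℂ))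
    (hC0 : Tendsto C atTop (𝓝 0)) (hJt0 : Tendsto Jt atTop (𝓝 0)) (n : ℕ) :
    Tendsto (fun N => ∑ k ∈ range N,
      C (n + k + 1) / ((r (n + k) * u (n + k) * v (n + k + 1) : ℝ) : ℂ)) atTop (𝓝 (Jt n - C n)) := by
  have hlim := tendsto_sum_range_sub_const_add (f := fun k => C k - Jt k)
    (by simpa only [sub_zero] using hC0.sub hJt0) n
  rw [neg_sub] at hlim
  exact hlim.congr fun N => sum_congr rfl fun k _ =>
    (succ_div_eq_sub_sub_of_casoratian hu hv hw hR hC hJt (n + k)).symm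

theorem stmt_7_general (r u v : ℕ → ℝ) (σ : ℕ → ℂ)
    (hr : ∀ n, 0 < r n) (hu : ∀ n, 0 < u n) (hv : ∀ n, 0 < v n)
    (hw : ∀ n, r n * (v (n + 1) * u n - u (n + 1) * v n) = 1)
    (hratio : ∀ n, u n / v n = ∑' k : ℕ, 1 / (r (n + k) * v (n + k) * v (n + k + 1)))
    (J : ℂ)
    (hJ : Tendsto (fun N : ℕ => ∑ k ∈ Finset.range N, σ k * (u k : ℂ) * (v k : ℂ))
      atTop (nhds J))
    (R : ℕ → ℂ)
    (hR : ∀ n, Tendsto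
      (fun N : ℕ => ∑ k ∈ Finset.range N, σ (n + k) * (u (n + k) : ℂ) ^ 2)
      atTop (nhds (R n)))
    (C : ℕ → ℂ) (hC : ∀ n, C n = ((v n / u n : ℝ) : ℂ) * R n)
    (Jt : ℕ → ℂ)
    (hJt : ∀ n, Jt n = J - ∑ k ∈ Finset.range n, σ k * (u k : ℂ) * (v k : ℂ)) :
    ∀ n : ℕ, ∃ H : ℂ,
      Tendsto (fun N : ℕ => ∑ k ∈ Finset.range N,
          C (n + k + 1) / ((r (n + k) * u (n + k) * v (n + k + 1) : ℝ) : ℂ))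
        atTop (nhds H) ∧
      Summable (fun k : ℕ =>
          Jt (n + k + 1) / ((r (n + k) * v (n + k) * v (n + k + 1) : ℝ) : ℂ)) ∧
      H = ((v n / u n : ℝ) : ℂ) *
          ∑' k : ℕ, Jt (n + k + 1) / ((r (n + k) * v (n + k) * v (n + k + 1) : ℝ) : ℂ) ∧
      H = Jt n - C n := by
  intro n
  set t : ℕ → ℝ := fun k => u k / v k with ht_def
  have ht : Antitone t := antitone_div_of_casoratian hr hv hw
  have ht0 : Tendsto t atTop (𝓝 0) :=
    tendsto_zero_of_forall_eq_tsum_nat_add (f := fun k => 1 / (r k * v k * v (k + 1))) hratio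
  have hJt0 : Tendsto Jt atTop (𝓝 0) := funext hJt ▸ tendsto_sub_sum_range_zero hJ
  have hJt_sub (k : ℕ) : Jt k - Jt (k + 1) = σ k * (u k : ℂ) * (v k : ℂ) := by
    rw [hJt, hJt, sum_range_succ]; ring
  have hRt (m : ℕ) : Tendsto (fun N => ∑ k ∈ range N, t (m + k) • (Jt (m + k) - Jt (m + k + 1)))
      atTop (𝓝 (R m)) := (hR m).congr fun N => sum_congr rfl fun k _ => by
    rw [hJt_sub, Complex.real_smul, ht_def]
    push_cast
    field_simp [(hv (m + k)).ne']
  have habel (m : ℕ) := ht.hasSum_tail_sub_succ_smul ht0 hJt0 (hRt m)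
  have hterm (m k : ℕ) := sub_succ_div_smul_eq_div_of_casoratian (fun n => (hv n).ne') hw (m + k)
    (Jt (m + k + 1))
  have hC0 : Tendsto C atTop (𝓝 0) := by
    convert ht.tendsto_inv_smul_of_tendsto_sum_range ht0 (fun m => div_pos (hu m) (hv m)) hJt0 hRt
      using 2 with m
    rw [hC, Complex.real_smul, ht_def, inv_div]
  refine ⟨Jt n - C n, tendsto_sum_range_succ_div_of_casoratian (fun k => (hu k).ne')
    (fun k => (hv k).ne') hw (eq_add_of_tendsto_sum_range_const_add hR) hC hJt_sub hC0 hJt0 n,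
    (habel n).summable.congr (hterm n), ?_, rfl⟩
  rw [← tsum_congr (hterm n), (habel n).tsum_eq, hC n, Complex.real_smul, ht_def]
  push_cast
  field_simp [(hu n).ne', (hv n).ne']

/-- Lemma 7.1a: in the setting of Assertion 1, the series
H_n = ∑_{k=n}^∞ C_{k+1}/(r_k u_k v_{k+1}) converges,
H_n = (v_n/u_n) ∑_{k=n}^∞ J_{k+1}/(r_k v_k v_{k+1}) (the latter summable), and H_n = J_n - C_n. -/
theorem stmt_7 (r u v : ℕ → ℝ) (σ : ℕ → ℂ)
    (hr : ∀ n, 0 < r n) (hu : ∀ n, 0 < u n) (hv : ∀ n, 0 < v n)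
    (hw : ∀ n, r n * (v (n + 1) * u n - u (n + 1) * v n) = 1)
    (hS : Summable (fun k : ℕ => 1 / (r k * v k * v (k + 1))))
    (hratio : ∀ n, u n / v n = ∑' k : ℕ, 1 / (r (n + k) * v (n + k) * v (n + k + 1)))
    (J : ℂ)
    (hJ : Tendsto (fun N : ℕ => ∑ k ∈ Finset.range N, σ k * (u k : ℂ) * (v k : ℂ))
      atTop (nhds J))
    (R : ℕ → ℂ)
    (hR : ∀ n, Tendsto
      (fun N : ℕ => ∑ k ∈ Finset.range N, σ (n + k) * (u (n + k) : ℂ) ^ 2)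
      atTop (nhds (R n)))
    (C : ℕ → ℂ) (hC : ∀ n, C n = ((v n / u n : ℝ) : ℂ) * R n)
    (Jt : ℕ → ℂ)
    (hJt : ∀ n, Jt n = J - ∑ k ∈ Finset.range n, σ k * (u k : ℂ) * (v k : ℂ)) :
    ∀ n : ℕ, ∃ H : ℂ,
      Tendsto (fun N : ℕ => ∑ k ∈ Finset.range N,
          C (n + k + 1) / ((r (n + k) * u (n + k) * v (n + k + 1) : ℝ) : ℂ))
        atTop (nhds H) ∧
      Summable (fun k : ℕ =>
          Jt (n + k + 1) / ((r (n + k) * v (n + k) * v (n + k + 1) : ℝ) : ℂ)) ∧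
      H = ((v n / u n : ℝ) : ℂ) *
          ∑' k : ℕ, Jt (n + k + 1) / ((r (n + k) * v (n + k) * v (n + k + 1) : ℝ) : ℂ) ∧
      H = Jt n - C n :=
  stmt_7_general r u v σ hr hu hv hw hratio J hJ R hR C hC Jt hJt
end

section
/- Let α ∈ [0,1) and β > 0 with α + β > 1. Then the series ∑_{n=n_0}^∞ (-1)^n (n+1)^{-β} v_n converges, where v_n = ∑_{k=1}^{n-1} k^{-α} (and v_1 = 0), for suitable n_0. -/
open Filter Finset Real Topology

/-! The tails `R n = ∑_{k ≥ n} (-1)^k (k+1)^{-β}` of the alternating series satisfy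
`|R n| ≤ (n+1)^{-β}`, and `(-1)^n (n+1)^{-β} = R n - R (n+1)`. Abel summation turns the series
into a boundary term `R N v N = O(N^{1-α-β}) → 0` (Bernoulli's inequality gives
`v N ≤ N^{1-α}/(1-α)`) plus the series `∑ R (n+1) (v (n+1) - v n)`,
whose terms are `O(n^{-(α+β)})`, hence summable since `α + β > 1`. -/

theorem sum_range_sub_mul_eq (R b : ℕ → ℝ) (N : ℕ) :
    ∑ n ∈ range N, (R n - R (n + 1)) * b n =
      R 0 * b 0 - R N * b N + ∑ n ∈ range N, R (n + 1) * (b (n + 1) - b n) := by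
  induction N with
  | zero => simp
  | succ N ih => rw [sum_range_succ, sum_range_succ, ih]; ring

theorem exists_tendsto_sum_range_sub_mul_of_abs_le {R b r : ℕ → ℝ} (hR : ∀ n, |R n| ≤ r n)
    (hb0 : ∀ n, 0 ≤ b n) (hb : Monotone b) (hrb : Tendsto (fun n => r n * b n) atTop (𝓝 0))
    (hs : Summable fun n => r (n + 1) * (b (n + 1) - b n)) :
    ∃ S, Tendsto (fun N => ∑ n ∈ range N, (R n - R (n + 1)) * b n) atTop (𝓝 S) := by
  have hRb : Tendsto (fun n => R n * b n) atTop (𝓝 0) := by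
    refine squeeze_zero_norm (fun n => ?_) hrb
    rw [norm_mul, norm_of_nonneg (hb0 n)]
    exact mul_le_mul_of_nonneg_right (hR n) (hb0 n)
  have hs' : Summable fun n => R (n + 1) * (b (n + 1) - b n) := by
    refine hs.of_norm_bounded fun n => ?_
    have hbn := sub_nonneg.2 (hb n.le_succ)
    rw [norm_mul, norm_of_nonneg hbn]
    exact mul_le_mul_of_nonneg_right (hR _) hbn
  simp_rw [sum_range_sub_mul_eq]
  exact ⟨_, (tendsto_const_nhds.sub hRb).add hs'.hasSum.tendsto_sum_nat⟩

theorem Antitone.abs_sub_alternating_series_le {f : ℕ → ℝ} (hf : Antitone f) {l : ℝ}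
    (hl : Tendsto (fun n => ∑ i ∈ range n, (-1) ^ i * f i) atTop (𝓝 l)) (n : ℕ) :
    |l - ∑ i ∈ range n, (-1) ^ i * f i| ≤ f n := by
  rw [abs_sub_le_iff]
  rcases Nat.even_or_odd' n with ⟨k, rfl | rfl⟩
  · have upper := hf.tendsto_le_alternating_series hl k
    have lower := hf.alternating_series_le_tendsto hl k
    rw [sum_range_succ, pow_mul, neg_one_sq, one_pow, one_mul] at upper
    constructor <;> linarith [hf (Nat.le_succ (2 * k))]
  · have upper := hf.tendsto_le_alternating_series hl k
    have lower := hf.alternating_series_le_tendsto hl (k + 1)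
    rw [mul_add, mul_one, sum_range_succ, pow_succ, pow_mul, neg_one_sq, one_pow, one_mul]
      at lower
    constructor <;> linarith

theorem mul_rpow_sub_one_le_rpow_sub_rpow {p x : ℝ} (hp0 : 0 ≤ p) (hp1 : p ≤ 1) (hx : 1 ≤ x) :
    p * x ^ (p - 1) ≤ x ^ p - (x - 1) ^ p := by
  have hx0 : 0 < x := by linarith
  have bernoulli : (1 + -x⁻¹) ^ p ≤ 1 + p * -x⁻¹ :=
    rpow_one_add_le_one_add_mul_self (by simpa using inv_le_one_of_one_le₀ hx) hp0 hp1
  have hsplit : (x - 1) ^ p = x ^ p * (1 + -x⁻¹) ^ p := by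
    rw [← mul_rpow hx0.le (by simpa using inv_le_one_of_one_le₀ hx), mul_add, mul_one, mul_neg,
      mul_inv_cancel₀ hx0.ne', ← sub_eq_add_neg]
  rw [hsplit, rpow_sub_one hx0.ne']
  have := mul_le_mul_of_nonneg_left bernoulli (rpow_nonneg hx0.le p)
  linarith [show x ^ p * (1 + p * -x⁻¹) = x ^ p - p * (x ^ p / x) by ring]

theorem sum_Icc_rpow_neg_le {α : ℝ} (hα0 : 0 ≤ α) (hα1 : α < 1) (n : ℕ) :
    ∑ k ∈ Icc 1 n, (k : ℝ) ^ (-α) ≤ (n : ℝ) ^ (1 - α) / (1 - α) := by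
  have hp : 0 < 1 - α := by linarith
  induction n with
  | zero => simp [zero_rpow hp.ne']
  | succ n ih =>
    have step := mul_rpow_sub_one_le_rpow_sub_rpow hp.le (by linarith)
      (by simp : (1 : ℝ) ≤ (n + 1 : ℕ))
    rw [sub_sub_cancel_left, Nat.cast_succ, add_sub_cancel_right] at step
    rw [sum_Icc_succ_top (by omega), le_div_iff₀ hp, add_mul, Nat.cast_succ]
    rw [le_div_iff₀ hp] at ih
    linarith

/-- The paper's `v n`; truncated subtraction makes `v 0 = v 1 = 0`. -/
noncomputable def zetaPartialSum (α : ℝ) (n : ℕ) : ℝ :=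
  ∑ k ∈ Icc 1 (n - 1), (k : ℝ) ^ (-α)

namespace zetaPartialSum

variable {α : ℝ}

theorem nonneg (α : ℝ) (n : ℕ) : 0 ≤ zetaPartialSum α n :=
  sum_nonneg fun k _ => rpow_nonneg k.cast_nonneg _

theorem monotone (α : ℝ) : Monotone (zetaPartialSum α) := fun _ _ h =>
  sum_le_sum_of_subset_of_nonneg (Icc_subset_Icc_right (by omega))
    fun k _ _ => rpow_nonneg k.cast_nonneg _

theorem add_two_sub (α : ℝ) (n : ℕ) :
    zetaPartialSum α (n + 2) - zetaPartialSum α (n + 1) = ((n : ℝ) + 1) ^ (-α) := by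
  simp [zetaPartialSum, sum_Icc_succ_top]

theorem le_rpow_div (hα0 : 0 ≤ α) (hα1 : α < 1) (n : ℕ) :
    zetaPartialSum α n ≤ (n : ℝ) ^ (1 - α) / (1 - α) :=
  (sum_le_sum_of_subset_of_nonneg (Icc_subset_Icc_right (n.sub_le 1))
    fun k _ _ => rpow_nonneg k.cast_nonneg _).trans (sum_Icc_rpow_neg_le hα0 hα1 n)

end zetaPartialSum

theorem tendsto_rpow_neg_mul_zetaPartialSum {α β : ℝ} (hα0 : 0 ≤ α) (hα1 : α < 1)
    (h1 : 1 < α + β) :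
    Tendsto (fun n : ℕ => ((n : ℝ) + 1) ^ (-β) * zetaPartialSum α n) atTop (𝓝 0) := by
  have hp : 0 < 1 - α := by linarith
  have hlim : Tendsto (fun n : ℕ => ((n : ℝ) + 1) ^ (-(α + β - 1)) / (1 - α)) atTop (𝓝 0) := by
    have := ((tendsto_rpow_neg_atTop (by linarith : 0 < α + β - 1)).comp
      (tendsto_atTop_add_const_right _ 1 tendsto_natCast_atTop_atTop)).div_const (1 - α)
    rwa [zero_div] at this
  refine squeeze_zero (fun n => mul_nonneg (by positivity) (zetaPartialSum.nonneg α n))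
    (fun n => ?_) hlim
  have hn : (0 : ℝ) < n + 1 := by positivity
  have hv : zetaPartialSum α n ≤ ((n : ℝ) + 1) ^ (1 - α) / (1 - α) :=
    (zetaPartialSum.le_rpow_div hα0 hα1 n).trans
      (div_le_div_of_nonneg_right (rpow_le_rpow n.cast_nonneg (by linarith) hp.le) hp.le)
  calc ((n : ℝ) + 1) ^ (-β) * zetaPartialSum α n
      ≤ ((n : ℝ) + 1) ^ (-β) * (((n : ℝ) + 1) ^ (1 - α) / (1 - α)) :=
        mul_le_mul_of_nonneg_left hv (by positivity)
    _ = ((n : ℝ) + 1) ^ (-(α + β - 1)) / (1 - α) := by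
        rw [mul_div_assoc', ← rpow_add hn]
        ring_nf

theorem summable_rpow_neg_mul_zetaPartialSum_sub {α β : ℝ} (hβ : 0 < β) (h1 : 1 < α + β) :
    Summable fun n : ℕ =>
      ((n : ℝ) + 2) ^ (-β) * (zetaPartialSum α (n + 1) - zetaPartialSum α n) := by
  have hmajor : Summable fun n : ℕ => ((n : ℝ) + 1) ^ (-(α + β)) := by
    simpa using (summable_nat_add_iff 1).mpr (summable_nat_rpow.mpr (by linarith : -(α + β) < -1))
  refine (summable_nat_add_iff 1).mp (hmajor.of_nonneg_of_le (fun n => ?_) fun n => ?_)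
  · exact mul_nonneg (by positivity) (sub_nonneg.2 (zetaPartialSum.monotone α (by omega)))
  · have hn : (0 : ℝ) < n + 1 := by positivity
    rw [zetaPartialSum.add_two_sub, neg_add, rpow_add hn, mul_comm (_ ^ (-α))]
    refine mul_le_mul_of_nonneg_right ?_ (by positivity)
    exact rpow_le_rpow_of_nonpos hn (by push_cast; linarith) (by linarith)

/-- step IV of Example 9.3: for α ∈ [0,1), β > 0, α + β > 1, the series
∑_{n=n₀}^∞ (-1)^n (n+1)^{-β} v_n converges, where v_n = ∑_{k=1}^{n-1} k^{-α}. -/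
theorem stmt_18 (α β : ℝ) (hα0 : 0 ≤ α) (hα1 : α < 1) (hβ : 0 < β) (h1 : 1 < α + β) :
    ∃ n₀ : ℕ, ∃ S : ℝ,
      Tendsto (fun N : ℕ => ∑ n ∈ Finset.Ico n₀ N,
          (-1 : ℝ) ^ n / ((n : ℝ) + 1) ^ β * ∑ k ∈ Finset.Icc 1 (n - 1), (k : ℝ) ^ (-α))
        atTop (nhds S) := by
  let g : ℕ → ℝ := fun n => ((n : ℝ) + 1) ^ (-β)
  have hg : Antitone g := fun m n h =>
    rpow_le_rpow_of_nonpos (by positivity) (by gcongr) (by linarith)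
  obtain ⟨T, hT⟩ := hg.tendsto_alternating_series_of_tendsto_zero
    ((tendsto_rpow_neg_atTop hβ).comp
      (tendsto_atTop_add_const_right _ 1 tendsto_natCast_atTop_atTop))
  obtain ⟨S, hS⟩ := exists_tendsto_sum_range_sub_mul_of_abs_le
    (R := fun n => T - ∑ i ∈ range n, (-1) ^ i * g i) (hg.abs_sub_alternating_series_le hT)
    (zetaPartialSum.nonneg α) (zetaPartialSum.monotone α)
    (tendsto_rpow_neg_mul_zetaPartialSum hα0 hα1 h1)
    ((summable_rpow_neg_mul_zetaPartialSum_sub hβ h1).congr fun n => by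
      simp only [g]; push_cast; ring_nf)
  refine ⟨0, S, hS.congr fun N => ?_⟩
  rw [← range_eq_Ico]
  refine sum_congr rfl fun n _ => ?_
  simp [sum_range_succ, g, zetaPartialSum, rpow_neg (by positivity : (0 : ℝ) ≤ n + 1),
    div_eq_mul_inv]
end
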